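/- Let φ₀(u,v) = cos(4πu/3) + cos(2π(1−u−√3 v)/3) + cos(2π(1+u−√3 v)/3). The only critical points of φ₀ in the rectangle [−5/8, 5/8] × [−√3/3, √3/2] are the points A = (−1/2, −√3/6), B = (1/2, −√3/6), C = (0, √3/3), and M_C = (0, −√3/6). -/

import Mathlib

open Real

/-- Partial derivative in the first variable. -/
noncomputable def pdx (f : ℝ × ℝ → ℝ) (p : ℝ × ℝ) : ℝ :=
  deriv (fun x => f (x, p.2)) p.1

/-- Partial derivative in the second variable. -/
noncomputable def pdy (f : ℝ × ℝ → ℝ) (p : ℝ × ℝ) : ℝ :=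
  deriv (fun y => f (p.1, y)) p.2

/-- The symmetric second Neumann eigenfunction of the equilateral triangle `T₀`. -/
noncomputable def phi0 (p : ℝ × ℝ) : ℝ :=
  Real.cos (4 * π * p.1 / 3) + Real.cos (2 * π * (1 - p.1 - Real.sqrt 3 * p.2) / 3)
    + Real.cos (2 * π * (1 + p.1 - Real.sqrt 3 * p.2) / 3)

/-!
In the angles `a = 2πu/3`, `b = 2π(1 - √3 v)/3` one has `φ₀ = cos 2a + 2 cos a cos b`, whose
gradient vanishes iff `sin a (2 cos a + cos b) = 0` and `cos a sin b = 0`. On the rectangle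
`|a| ≤ 5π/12` and `-π/3 ≤ b ≤ 4π/3`, so `cos a > 0` and `sin b = 0`, i.e. `b ∈ {0, π}`.
For `b = 0` the factor `2 cos a + 1` is positive, forcing `a = 0`; for `b = π` either `a = 0`
or `cos a = 1/2`, i.e. `a = ±π/3`.
-/

namespace Real

lemma sin_eq_zero_iff_of_neg_pi_lt_of_lt_two_pi {x : ℝ} (h₁ : -π < x) (h₂ : x < 2 * π) :
    sin x = 0 ↔ x = 0 ∨ x = π := by
  rcases lt_or_ge x π with hx | hx
  · rw [sin_eq_zero_iff_of_lt_of_lt h₁ hx]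
    exact ⟨Or.inl, fun h => h.resolve_right hx.ne⟩
  · have h := sin_eq_zero_iff_of_lt_of_lt (x := x - π) (by linarith) (by linarith)
    rw [sin_sub_pi, neg_eq_zero, sub_eq_zero] at h
    rw [h]
    exact ⟨Or.inr, fun h' => h'.resolve_left (by linarith [pi_pos])⟩

lemma cos_eq_half_iff_of_abs_le_pi {x : ℝ} (hx : |x| ≤ π) :
    cos x = 1 / 2 ↔ x = π / 3 ∨ x = -(π / 3) := by
  rw [← abs_eq (by positivity), ← cos_abs, ← cos_pi_div_three]
  exact injOn_cos.eq_iff ⟨abs_nonneg x, hx⟩ ⟨by positivity, by linarith [pi_pos]⟩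

end Real

lemma gradient_cos_two_mul_add_two_cos_mul_cos_eq_zero_iff {a b : ℝ} (ha : |a| < π / 2)
    (hb₁ : -π < b) (hb₂ : b < 2 * π) :
    (sin a * (2 * cos a + cos b) = 0 ∧ sin b * cos a = 0) ↔
      (a, b) = (-(π / 3), π) ∨ (a, b) = (π / 3, π) ∨ (a, b) = (0, 0) ∨ (a, b) = (0, π) := by
  obtain ⟨ha₁, ha₂⟩ := abs_lt.mp ha
  have hcos : 0 < cos a := cos_pos_of_mem_Ioo ⟨ha₁, ha₂⟩
  have hsin : sin a = 0 ↔ a = 0 := sin_eq_zero_iff_of_lt_of_lt (by linarith) (by linarith)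
  have hhalf : cos a = 1 / 2 ↔ a = π / 3 ∨ a = -(π / 3) :=
    cos_eq_half_iff_of_abs_le_pi (by linarith)
  have hhalf' : 2 * cos a + -1 = 0 ↔ cos a = 1 / 2 := by constructor <;> intro <;> linarith
  rw [mul_eq_zero, mul_eq_zero, or_iff_left hcos.ne',
    sin_eq_zero_iff_of_neg_pi_lt_of_lt_two_pi hb₁ hb₂]
  simp only [Prod.mk.injEq]
  constructor
  · rintro ⟨ha', rfl | rfl⟩
    · rw [cos_zero, or_iff_left (by linarith), hsin] at ha'
      tauto
    · rw [cos_pi, hsin, hhalf', hhalf] at ha'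
      tauto
  · rintro (⟨rfl, rfl⟩ | ⟨rfl, rfl⟩ | ⟨rfl, rfl⟩ | ⟨rfl, rfl⟩) <;> simp

noncomputable def phi0Angles (p : ℝ × ℝ) : ℝ × ℝ :=
  (2 * π * p.1 / 3, 2 * π * (1 - √3 * p.2) / 3)

lemma phi0Angles_injective : Function.Injective phi0Angles := by
  rintro ⟨u, v⟩ ⟨u', v'⟩ h
  simp only [phi0Angles, Prod.mk.injEq] at h
  have hπ := pi_pos
  have h3 : √3 ≠ 0 := by positivity
  obtain ⟨hu, hv⟩ := h
  refine Prod.ext ?_ (mul_left_cancel₀ h3 ?_) <;> nlinarith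

lemma phi0Angles_vertices :
    phi0Angles (-(1 / 2), -(√3 / 6)) = (-(π / 3), π) ∧ phi0Angles (1 / 2, -(√3 / 6)) = (π / 3, π) ∧
      phi0Angles (0, √3 / 3) = (0, 0) ∧ phi0Angles (0, -(√3 / 6)) = (0, π) := by
  have h3 : √3 ^ 2 = 3 := sq_sqrt (by norm_num)
  simp only [phi0Angles, Prod.mk.injEq]
  refine ⟨⟨?_, ?_⟩, ⟨?_, ?_⟩, ⟨?_, ?_⟩, ⟨?_, ?_⟩⟩ <;> ring_nf <;> simp only [h3] <;> ring

lemma phi0_eq (p : ℝ × ℝ) :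
    phi0 p = cos (2 * (phi0Angles p).1) + 2 * cos (phi0Angles p).1 * cos (phi0Angles p).2 := by
  simp only [phi0, phi0Angles]
  rw [show 2 * π * (1 - p.1 - √3 * p.2) / 3 = 2 * π * (1 - √3 * p.2) / 3 - 2 * π * p.1 / 3 by
      ring,
    show 2 * π * (1 + p.1 - √3 * p.2) / 3 = 2 * π * (1 - √3 * p.2) / 3 + 2 * π * p.1 / 3 by
      ring,
    cos_sub, cos_add]
  ring_nf

lemma hasDerivAt_phi0_fst (u v : ℝ) :
    HasDerivAt (fun x => phi0 (x, v))
      (-(4 * π / 3) * (sin (phi0Angles (u, v)).1 *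
        (2 * cos (phi0Angles (u, v)).1 + cos (phi0Angles (u, v)).2))) u := by
  have ha : HasDerivAt (fun x => 2 * π * x / 3) (2 * π / 3) u := by
    simpa using ((hasDerivAt_id u).const_mul (2 * π)).div_const 3
  simp only [phi0_eq, phi0Angles]
  refine ((ha.const_mul 2).cos.add ((ha.cos.const_mul 2).mul_const _)).congr_deriv ?_
  rw [sin_two_mul]
  ring

lemma hasDerivAt_phi0_snd (u v : ℝ) :
    HasDerivAt (fun y => phi0 (u, y))
      (4 * √3 * π / 3 * (sin (phi0Angles (u, v)).2 * cos (phi0Angles (u, v)).1)) v := by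
  have hb : HasDerivAt (fun y => 2 * π * (1 - √3 * y) / 3) (-(2 * π * √3 / 3)) v := by
    have h := ((((hasDerivAt_id v).const_mul √3).const_sub 1).const_mul (2 * π)).div_const 3
    exact h.congr_deriv (by ring)
  simp only [phi0_eq, phi0Angles]
  refine ((hb.cos.const_mul (2 * cos (2 * π * u / 3))).const_add
    (cos (2 * (2 * π * u / 3)))).congr_deriv ?_
  ring

lemma gradient_phi0_eq_zero_iff (p : ℝ × ℝ) :
    (pdx phi0 p = 0 ∧ pdy phi0 p = 0) ↔
      (sin (phi0Angles p).1 * (2 * cos (phi0Angles p).1 + cos (phi0Angles p).2) = 0 ∧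
        sin (phi0Angles p).2 * cos (phi0Angles p).1 = 0) := by
  obtain ⟨u, v⟩ := p
  have hx : -(4 * π / 3) ≠ 0 := by linarith [pi_pos]
  have hy : 4 * √3 * π / 3 ≠ 0 := by positivity
  rw [pdx, pdy, (hasDerivAt_phi0_fst u v).deriv, (hasDerivAt_phi0_snd u v).deriv,
    mul_eq_zero_iff_left hx, mul_eq_zero_iff_left hy]

lemma phi0Angles_bounds {p : ℝ × ℝ}
    (hp : p ∈ Set.Icc (-(5 : ℝ) / 8) (5 / 8) ×ˢ Set.Icc (-(√3 / 3)) (√3 / 2)) :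
    |(phi0Angles p).1| < π / 2 ∧ -π < (phi0Angles p).2 ∧ (phi0Angles p).2 < 2 * π := by
  obtain ⟨⟨hu₁, hu₂⟩, hv₁, hv₂⟩ := hp
  have hπ := pi_pos
  have h3 : √3 * √3 = 3 := mul_self_sqrt (by norm_num)
  have hv₁' : -1 ≤ √3 * p.2 := by nlinarith [sqrt_nonneg 3]
  have hv₂' : √3 * p.2 ≤ 3 / 2 := by nlinarith [sqrt_nonneg 3]
  simp only [phi0Angles]
  refine ⟨abs_lt.mpr ⟨?_, ?_⟩, ?_, ?_⟩ <;> nlinarith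

/-- The only critical points of `φ₀` in `[−5/8, 5/8] × [−√3/3, √3/2]` are
`A = (−1/2, −√3/6)`, `B = (1/2, −√3/6)`, `C = (0, √3/3)` and `M_C = (0, −√3/6)`. -/
theorem phi0_critical_points :
    ∀ p : ℝ × ℝ,
      p ∈ Set.Icc (-(5 : ℝ) / 8) (5 / 8) ×ˢ Set.Icc (-(Real.sqrt 3 / 3)) (Real.sqrt 3 / 2) →
      ((pdx phi0 p = 0 ∧ pdy phi0 p = 0) ↔
        (p = (-(1 / 2), -(Real.sqrt 3 / 6)) ∨ p = (1 / 2, -(Real.sqrt 3 / 6)) ∨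
         p = (0, Real.sqrt 3 / 3) ∨ p = (0, -(Real.sqrt 3 / 6)))) := by
  intro p hp
  obtain ⟨ha, hb₁, hb₂⟩ := phi0Angles_bounds hp
  obtain ⟨hA, hB, hC, hM⟩ := phi0Angles_vertices
  rw [gradient_phi0_eq_zero_iff, gradient_cos_two_mul_add_two_cos_mul_cos_eq_zero_iff ha hb₁ hb₂]
  rw [← hA, ← hB, ← hC, ← hM]
  simp only [Prod.mk.eta, phi0Angles_injective.eq_iff]
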